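/- Let (M, Φ, φ) be a quantum dynamical system with φ-adjoint Φ♯, and let D_∞ = ⋂_{k∈ℤ} D_{Φ_k} where Φ_k = Φ^k for k ≥ 0 and Φ_k = Φ♯^{|k|} for k < 0. Then Φ(D_∞) ⊆ D_∞ and Φ♯(D_∞) ⊆ D_∞, and the restriction Φ_∞ of Φ to D_∞ is a *-automorphism with inverse the restriction of Φ♯, i.e., Φ(Φ♯(d)) = Φ♯(Φ(d)) = d for all d ∈ D_∞. -/

import Mathlib

/-!
The Schwartz inequality and `φ`-invariance make `(a, b) ↦ φ (star a * b) - φ (star (Φ a) * Φ b)`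
a positive semidefinite form, and faithfulness of `φ` identifies the multiplicative domain of `Φ`
with the elements `a` such that the form vanishes at `(a, a)` and at `(star a, star a)`. By
Cauchy–Schwarz such an `a` is then orthogonal to everything, so `φ (star (Φ♯ (Φ a) - a) * b) = 0`
for all `b`, whence `Φ♯ (Φ a) = a`. On `D_∞` this lets `Φ` shift the orbit `k ↦ Φ_k a` by one
step, which keeps `D_∞` invariant; multiplicativity follows by polarization. Exchanging `Φ` and
`Φ♯` reverses `k ↦ Φ_k`, which gives the statements for `Φ♯`.
-/

open scoped ComplexOrder

section
variable {M : Type*} [NormedRing M] [StarRing M] [CStarRing M] [NormedAlgebra ℂ M]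
  [StarModule ℂ M] [CompleteSpace M] [PartialOrder M] [StarOrderedRing M]

/-- The multiplicative domain of a linear map `Φ`. -/
def multDomain (Φ : Module.End ℂ M) : Set M :=
  {a : M | Φ (star a * a) = Φ (star a) * Φ a ∧ Φ (a * star a) = Φ a * Φ (star a)}

/-- `φ` is a state: unital and positive. -/
def IsState (φ : M →ₗ[ℂ] ℂ) : Prop :=
  φ 1 = 1 ∧ ∀ a : M, 0 ≤ φ (star a * a)

/-- `φ` is faithful. -/
def IsFaithful (φ : M →ₗ[ℂ] ℂ) : Prop :=
  ∀ a : M, φ (star a * a) = 0 → a = 0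

/-- `Φ` is a unital Schwartz map. -/
def IsSchwartz (Φ : Module.End ℂ M) : Prop :=
  Φ 1 = 1 ∧ ∀ a : M, star (Φ a) * Φ a ≤ Φ (star a * a)

/-- The `φ`-orthogonal complement of a set `R`. -/
def phiPerp (φ : M →ₗ[ℂ] ℂ) (R : Set M) : Set M :=
  {a : M | ∀ x ∈ R, φ (star a * x) = 0}


/-- The two-sided family of dynamics: `Φ^k` for `k ≥ 0` and `(Φ♯)^|k|` for `k < 0`. -/
noncomputable def phiZ (Φ Ψ : Module.End ℂ M) : ℤ → Module.End ℂ M :=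
  fun k => if 0 ≤ k then Φ ^ k.toNat else Ψ ^ (-k).toNat

/-- The algebra of effective observables `D_∞ = ⋂_{k ∈ ℤ} D_{Φ_k}`. -/
def Dinf (Φ Ψ : Module.End ℂ M) : Set M := ⋂ k : ℤ, multDomain (phiZ Φ Ψ k)

open ComplexConjugate

lemma Complex.eq_zero_of_forall_nonneg_add_mul_conj {A c : ℂ}
    (h : ∀ t : ℂ, 0 ≤ A + t * conj c + conj t * c) : c = 0 := by
  have hlin : ∀ r : ℝ, 0 ≤ 0 * (r * r) + (-2 * Complex.normSq c) * r + A.re := fun r ↦ by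
    have hre := (Complex.nonneg_iff.1 (h (-(r : ℂ) * c))).1
    simp only [Complex.add_re, Complex.mul_re, Complex.mul_im, Complex.neg_re, Complex.neg_im,
      Complex.ofReal_re, Complex.ofReal_im, Complex.conj_re, Complex.conj_im, map_mul, map_neg,
      Complex.conj_ofReal] at hre
    rw [Complex.normSq_apply]
    ring_nf at hre ⊢
    linarith
  have hdiscrim := discrim_le_zero hlin
  rw [discrim] at hdiscrim
  exact Complex.normSq_eq_zero.1 (by nlinarith [Complex.normSq_nonneg c])

lemma LinearMap.map_star_add_smul_mul_add_smul {A : Type*} [Ring A] [StarRing A] [Module ℂ A]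
    [StarModule ℂ A] [IsScalarTower ℂ A A] [SMulCommClass ℂ A A] (φ : A →ₗ[ℂ] ℂ) (t : ℂ)
    (x y : A) :
    φ (star (x + t • y) * (x + t • y)) = φ (star x * x) + t * φ (star x * y)
      + conj t * φ (star y * x) + conj t * t * φ (star y * y) := by
  simp only [star_add, star_smul, add_mul, mul_add, smul_mul_assoc, mul_smul_comm,
    map_add, map_smul, smul_eq_mul, RCLike.star_def]
  ring

noncomputable def LinearMap.toPositiveLinearMapOfStarMulSelf {N : Type*} [AddCommGroup N]
    [PartialOrder N] [IsOrderedAddMonoid N] [Module ℂ N] (f : M →ₗ[ℂ] N)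
    (hf : ∀ b, 0 ≤ f (star b * b)) : M →ₚ[ℂ] N :=
  PositiveLinearMap.mk₀ f fun _ ha ↦ by
    let : CStarAlgebra M := {}
    obtain ⟨b, rfl⟩ := CStarAlgebra.nonneg_iff_eq_star_mul_self.mp ha
    exact hf b

variable {φ : M →ₗ[ℂ] ℂ} {T S : Module.End ℂ M}

noncomputable def IsState.toPositiveLinearMap (hφ : IsState φ) : M →ₚ[ℂ] ℂ :=
  φ.toPositiveLinearMapOfStarMulSelf hφ.2

noncomputable def IsSchwartz.toPositiveLinearMap (hT : IsSchwartz T) : M →ₚ[ℂ] M :=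
  T.toPositiveLinearMapOfStarMulSelf fun b ↦ (star_mul_self_nonneg _).trans (hT.2 b)

namespace IsState

lemma monotone (hφ : IsState φ) : Monotone φ :=
  hφ.toPositiveLinearMap.monotone'

lemma map_star (hφ : IsState φ) (a : M) : φ (star a) = conj (φ a) := by
  let : CStarAlgebra M := {}
  exact StarHomClass.map_star hφ.toPositiveLinearMap a

lemma map_star_mul_comm (hφ : IsState φ) (x y : M) :
    φ (star y * x) = conj (φ (star x * y)) := by
  rw [← hφ.map_star, star_mul, star_star]

end IsState

lemma IsFaithful.eq_zero_of_nonneg (hfaith : IsFaithful φ) {p : M} (hp : 0 ≤ p)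
    (h : φ p = 0) : p = 0 := by
  let : CStarAlgebra M := {}
  obtain ⟨b, rfl⟩ := CStarAlgebra.nonneg_iff_eq_star_mul_self.mp hp
  rw [hfaith b h, mul_zero]

namespace IsSchwartz

lemma monotone (hT : IsSchwartz T) : Monotone T :=
  hT.toPositiveLinearMap.monotone'

lemma map_star (hT : IsSchwartz T) (a : M) : T (star a) = star (T a) := by
  let : CStarAlgebra M := {}
  exact StarHomClass.map_star hT.toPositiveLinearMap a

lemma mul (hS : IsSchwartz S) (hT : IsSchwartz T) : IsSchwartz (S * T) :=
  ⟨by rw [Module.End.mul_apply, hT.1, hS.1],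
    fun a ↦ (hS.2 (T a)).trans (hS.monotone (hT.2 a))⟩

lemma pow (hT : IsSchwartz T) (n : ℕ) : IsSchwartz (T ^ n) := by
  induction n with
  | zero => exact ⟨rfl, fun _ ↦ le_rfl⟩
  | succ n ih => rw [pow_succ]; exact ih.mul hT

end IsSchwartz

section

omit [StarRing M] [CStarRing M] [StarModule ℂ M] [CompleteSpace M] [PartialOrder M]
  [StarOrderedRing M]

lemma invariant_pow (hTφ : ∀ a, φ (T a) = φ a) (n : ℕ) (a : M) : φ ((T ^ n) a) = φ a := by
  induction n with
  | zero => rfl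
  | succ n ih => rw [pow_succ', Module.End.mul_apply, hTφ, ih]

lemma invariant_phiZ (hTφ : ∀ a, φ (T a) = φ a) (hSφ : ∀ a, φ (S a) = φ a) (k : ℤ) (a : M) :
    φ (phiZ T S k a) = φ a := by
  unfold phiZ
  split_ifs
  exacts [invariant_pow hTφ _ a, invariant_pow hSφ _ a]

lemma phiZ_of_nonneg {k : ℤ} (hk : 0 ≤ k) : phiZ T S k = T ^ k.toNat := if_pos hk

lemma phiZ_neg (k : ℤ) : phiZ S T (-k) = phiZ T S k := by
  unfold phiZ
  split_ifs with hneg hpos hpos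
  · obtain rfl : k = 0 := by omega
    rfl
  · rfl
  · rw [neg_neg]
  · omega

lemma phiZ_one : phiZ T S 1 = T := by
  rw [phiZ_of_nonneg zero_le_one, Int.toNat_one, pow_one]

lemma phiZ_add_one {k : ℤ} (hk : 0 ≤ k) : phiZ T S (k + 1) = phiZ T S k * T := by
  rw [phiZ_of_nonneg hk, phiZ_of_nonneg (by omega), show (k + 1).toNat = k.toNat + 1 by omega,
    pow_succ]

lemma phiZ_of_neg {k : ℤ} (hk : k < 0) : phiZ T S k = phiZ T S (k + 1) * S := by
  rw [← phiZ_neg, ← phiZ_neg (k + 1), show -k = -(k + 1) + 1 by ring, phiZ_add_one (by omega)]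

lemma phiZ_apply_map {a : M} (ha : S (T a) = a) (k : ℤ) :
    phiZ T S k (T a) = phiZ T S (k + 1) a := by
  rcases lt_or_ge k 0 with hk | hk
  · rw [phiZ_of_neg hk, Module.End.mul_apply, ha]
  · rw [phiZ_add_one hk, Module.End.mul_apply]

end

lemma isSchwartz_phiZ (hT : IsSchwartz T) (hS : IsSchwartz S) (k : ℤ) :
    IsSchwartz (phiZ T S k) := by
  unfold phiZ
  split_ifs
  exacts [hT.pow _, hS.pow _]

section

omit [CStarRing M] [StarModule ℂ M] [CompleteSpace M] [PartialOrder M] [StarOrderedRing M]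

lemma Dinf_comm : Dinf S T = Dinf T S := by
  rw [Dinf, ← neg_surjective.iInter_comp]
  simp only [phiZ_neg]
  rfl

/-- For a Schwartz map `T` preserving `φ`, `a ∈ isometricSet φ T` iff `φ (S_T(a, a)) = 0`. -/
def isometricSet (φ : M →ₗ[ℂ] ℂ) (T : Module.End ℂ M) : Set M :=
  {a | φ (star (T a) * T a) = φ (star a * a)}

lemma mem_isometricSet {a : M} :
    a ∈ isometricSet φ T ↔ φ (star (T a) * T a) = φ (star a * a) :=
  Iff.rfl

/-- `S` is the `φ`-adjoint `T♯` of `T`. -/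
def IsPhiAdjoint (φ : M →ₗ[ℂ] ℂ) (T S : Module.End ℂ M) : Prop :=
  ∀ x y, φ (star (S x) * y) = φ (star x * T y)

end

lemma IsPhiAdjoint.symm (hφ : IsState φ) (h : IsPhiAdjoint φ T S) : IsPhiAdjoint φ S T :=
  fun x y ↦ by rw [hφ.map_star_mul_comm, ← h, ← hφ.map_star_mul_comm]

/-- `(a, b) ↦ φ (star a * b) - φ (star (T a) * T b)` is a positive semidefinite form, so it
vanishes in `b` as soon as it vanishes on the diagonal at `a`. -/
lemma inner_map_eq_of_mem_isometricSet (hφ : IsState φ) (hT : IsSchwartz T)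
    (hTφ : ∀ a, φ (T a) = φ a) {a : M} (ha : a ∈ isometricSet φ T) (b : M) :
    φ (star (T a) * T b) = φ (star a * b) := by
  set D : M → M → ℂ := fun u v ↦ φ (star u * v) - φ (star (T u) * T v) with hD
  have hD_nonneg (u : M) : 0 ≤ D u u := by
    rw [hD, sub_nonneg, ← hTφ (star u * u)]
    exact hφ.monotone (hT.2 u)
  have hD_expand (t : ℂ) :
      D (b + t • a) (b + t • a) = D b b + t * conj (D a b) + conj t * D a b := by
    have hDaa : D a a = 0 := sub_eq_zero.2 ha.symm
    have hDba : D b a = conj (D a b) := by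
      rw [hD, map_sub, ← hφ.map_star_mul_comm, ← hφ.map_star_mul_comm]
    simp only [hD, map_add, map_smul, LinearMap.map_star_add_smul_mul_add_smul] at hDaa hDba ⊢
    linear_combination t * hDba + conj t * t * hDaa
  have := Complex.eq_zero_of_forall_nonneg_add_mul_conj fun t ↦ hD_expand t ▸ hD_nonneg _
  exact (sub_eq_zero.1 this).symm

lemma add_smul_mem_isometricSet (hφ : IsState φ) (hT : IsSchwartz T)
    (hTφ : ∀ a, φ (T a) = φ a) {x y : M} (hx : x ∈ isometricSet φ T)
    (hy : y ∈ isometricSet φ T) (t : ℂ) : x + t • y ∈ isometricSet φ T := by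
  rw [mem_isometricSet, map_add, map_smul,
    LinearMap.map_star_add_smul_mul_add_smul, LinearMap.map_star_add_smul_mul_add_smul, hx, hy,
    inner_map_eq_of_mem_isometricSet hφ hT hTφ hx, inner_map_eq_of_mem_isometricSet hφ hT hTφ hy]

/-- The Schwartz defect `T (star a * a) - star (T a) * T a` is positive, and its `φ`-value
vanishes. -/
lemma map_star_mul_self_of_mem_isometricSet (hfaith : IsFaithful φ) (hT : IsSchwartz T)
    (hTφ : ∀ a, φ (T a) = φ a) {a : M} (ha : a ∈ isometricSet φ T) :
    T (star a * a) = star (T a) * T a := by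
  have hdefect : φ (T (star a * a) - star (T a) * T a) = 0 := by
    rw [map_sub, hTφ, ha, sub_self]
  exact sub_eq_zero.1 (hfaith.eq_zero_of_nonneg (sub_nonneg.2 (hT.2 a)) hdefect)

lemma mem_multDomain_iff (hfaith : IsFaithful φ) (hT : IsSchwartz T)
    (hTφ : ∀ a, φ (T a) = φ a) {a : M} :
    a ∈ multDomain T ↔ a ∈ isometricSet φ T ∧ star a ∈ isometricSet φ T := by
  have key (b : M) : T (star b * b) = T (star b) * T b ↔ b ∈ isometricSet φ T := by
    rw [hT.map_star]
    refine ⟨fun h ↦ ?_, map_star_mul_self_of_mem_isometricSet hfaith hT hTφ⟩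
    rw [mem_isometricSet, ← h, hTφ]
  rw [← key, ← key, star_star]
  rfl

/-- Polarization: the two expansions at `x + y` and `x + I • y` isolate the cross term. -/
lemma map_star_mul_of_mem_isometricSet (hφ : IsState φ) (hfaith : IsFaithful φ)
    (hT : IsSchwartz T) (hTφ : ∀ a, φ (T a) = φ a) {x y : M} (hx : x ∈ isometricSet φ T)
    (hy : y ∈ isometricSet φ T) : T (star x * y) = star (T x) * T y := by
  have hmult (t : ℂ) := map_star_mul_self_of_mem_isometricSet hfaith hT hTφ
    (add_smul_mem_isometricSet hφ hT hTφ hx hy t)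
  have h1 := hmult 1
  have hI := hmult Complex.I
  simp only [star_add, star_smul, add_mul, mul_add, smul_mul_assoc, mul_smul_comm, map_add,
    map_smul, RCLike.star_def, Complex.conj_I, one_smul,
    map_star_mul_self_of_mem_isometricSet hfaith hT hTφ hx,
    map_star_mul_self_of_mem_isometricSet hfaith hT hTφ hy] at h1 hI
  linear_combination (norm := skip) (1 / 2 : ℂ) • h1 + (-Complex.I / 2) • hI
  match_scalars <;> ring_nf <;> simp only [Complex.I_sq] <;> ring

lemma apply_apply_eq_self_of_mem_isometricSet (hφ : IsState φ) (hfaith : IsFaithful φ)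
    (hT : IsSchwartz T) (hTφ : ∀ a, φ (T a) = φ a) (hadj : IsPhiAdjoint φ T S) {a : M}
    (ha : a ∈ isometricSet φ T) : S (T a) = a := by
  have horth (b : M) : φ (star (S (T a) - a) * b) = 0 := by
    rw [star_sub, sub_mul, map_sub, hadj, inner_map_eq_of_mem_isometricSet hφ hT hTφ ha, sub_self]
  exact sub_eq_zero.1 (hfaith _ (horth _))

lemma IsPhiAdjoint.invariant (h : IsPhiAdjoint φ T S) (hT : T 1 = 1) (hS : IsSchwartz S)
    (a : M) : φ (S a) = φ a := by
  have h1 := h (star a) 1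
  rwa [mul_one, hT, mul_one, ← hS.map_star, star_star] at h1

structure IsQuantumDynamicalSystem (φ : M →ₗ[ℂ] ℂ) (T S : Module.End ℂ M) : Prop where
  state : IsState φ
  faithful : IsFaithful φ
  schwartz : IsSchwartz T
  schwartz_adjoint : IsSchwartz S
  invariant : ∀ a, φ (T a) = φ a
  adjoint : IsPhiAdjoint φ T S

namespace IsQuantumDynamicalSystem

variable (hQ : IsQuantumDynamicalSystem φ T S)
include hQ

lemma symm : IsQuantumDynamicalSystem φ S T :=
  ⟨hQ.state, hQ.faithful, hQ.schwartz_adjoint, hQ.schwartz,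
    hQ.adjoint.invariant hQ.schwartz.1 hQ.schwartz_adjoint, hQ.adjoint.symm hQ.state⟩

lemma mem_Dinf_iff {d : M} : d ∈ Dinf T S ↔
    ∀ k, d ∈ isometricSet φ (phiZ T S k) ∧ star d ∈ isometricSet φ (phiZ T S k) := by
  simp only [Dinf, Set.mem_iInter]
  exact forall_congr' fun k ↦ mem_multDomain_iff hQ.faithful
    (isSchwartz_phiZ hQ.schwartz hQ.schwartz_adjoint k)
    (invariant_phiZ hQ.invariant hQ.symm.invariant k)

lemma mem_isometricSet_of_mem_Dinf {d : M} (hd : d ∈ Dinf T S) :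
    d ∈ isometricSet φ T ∧ star d ∈ isometricSet φ T := by
  simpa only [phiZ_one] using hQ.mem_Dinf_iff.1 hd 1

lemma apply_apply_eq_self_of_mem_Dinf {d : M} (hd : d ∈ Dinf T S) : S (T d) = d :=
  apply_apply_eq_self_of_mem_isometricSet hQ.state hQ.faithful hQ.schwartz hQ.invariant
    hQ.adjoint (hQ.mem_isometricSet_of_mem_Dinf hd).1

/-- As `S (T a) = a` gives `phiZ T S k (T a) = phiZ T S (k + 1) a`, applying `T` shifts the orbit
`k ↦ phiZ T S k a`, along which `φ (star x * x)` is constant. -/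
lemma apply_mem_Dinf {d : M} (hd : d ∈ Dinf T S) : T d ∈ Dinf T S := by
  have hshift {a : M} (ha : S (T a) = a) (h : ∀ k, a ∈ isometricSet φ (phiZ T S k)) (k : ℤ) :
      T a ∈ isometricSet φ (phiZ T S k) := by
    have h1 := h 1
    rw [phiZ_one, mem_isometricSet] at h1
    rw [mem_isometricSet, phiZ_apply_map ha, mem_isometricSet.1 (h (k + 1)), h1]
  have hG := hQ.mem_Dinf_iff.1 hd
  have hstar : star d ∈ Dinf T S :=
    hQ.mem_Dinf_iff.2 fun k ↦ by simpa only [star_star] using (hG k).symm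
  refine hQ.mem_Dinf_iff.2 fun k ↦ ⟨hshift (hQ.apply_apply_eq_self_of_mem_Dinf hd)
    (fun k ↦ (hG k).1) k, ?_⟩
  rw [← hQ.schwartz.map_star]
  exact hshift (hQ.apply_apply_eq_self_of_mem_Dinf hstar) (fun k ↦ (hG k).2) k

lemma map_mul_of_mem_Dinf {d e : M} (hd : d ∈ Dinf T S) (he : e ∈ Dinf T S) :
    T (d * e) = T d * T e := by
  have h := map_star_mul_of_mem_isometricSet hQ.state hQ.faithful hQ.schwartz hQ.invariant
    (hQ.mem_isometricSet_of_mem_Dinf hd).2 (hQ.mem_isometricSet_of_mem_Dinf he).1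
  rwa [star_star, hQ.schwartz.map_star, star_star] at h

end IsQuantumDynamicalSystem

/-- `D_∞` is invariant under `Φ` and `Φ♯`, and the restriction of `Φ`
to `D_∞` is a *-automorphism whose inverse is the restriction of `Φ♯`. -/
theorem Dinf_reversible
    (Φ Ψ : Module.End ℂ M) (hΦ : IsSchwartz Φ) (hΨ : IsSchwartz Ψ)
    (φ : M →ₗ[ℂ] ℂ) (hφ : IsState φ) (hfaith : IsFaithful φ)
    (hstat : ∀ a : M, φ (Φ a) = φ a)
    (hadj : ∀ a b : M, φ (b * Φ a) = φ (Ψ b * a)) :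
    (∀ d ∈ Dinf Φ Ψ, Φ d ∈ Dinf Φ Ψ) ∧
    (∀ d ∈ Dinf Φ Ψ, Ψ d ∈ Dinf Φ Ψ) ∧
    (∀ d ∈ Dinf Φ Ψ, Φ (Ψ d) = d ∧ Ψ (Φ d) = d) ∧
    (∀ d ∈ Dinf Φ Ψ, ∀ e ∈ Dinf Φ Ψ, Φ (d * e) = Φ d * Φ e) ∧
    (∀ d ∈ Dinf Φ Ψ, Φ (star d) = star (Φ d)) := by
  have hQ : IsQuantumDynamicalSystem φ Φ Ψ :=
    ⟨hφ, hfaith, hΦ, hΨ, hstat, fun x y ↦ by rw [← hΨ.map_star, ← hadj]⟩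
  refine ⟨fun d ↦ hQ.apply_mem_Dinf, fun d hd ↦ ?_,
    fun d hd ↦ ⟨?_, hQ.apply_apply_eq_self_of_mem_Dinf hd⟩,
    fun d hd e ↦ hQ.map_mul_of_mem_Dinf hd, fun d _ ↦ hΦ.map_star d⟩
  · rw [← Dinf_comm] at hd ⊢
    exact hQ.symm.apply_mem_Dinf hd
  · rw [← Dinf_comm] at hd
    exact hQ.symm.apply_apply_eq_self_of_mem_Dinf hd

end
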